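/- arXiv:2303.04527 — 3 statements merged into one kernel-verified Lean document; each statement's English description precedes it below -/
import Mathlib

section
/- Let Ω ⊂ ℝ^d be bounded open with a regular weakly balanced p-multiscale decomposition (Ω_{n,k}) and let f = ∑_{j=0}^{p^n-1} f_{n,j} 𝟙_{Ω_{n,j}} be a level-n piecewise constant function. Then there exists C ≥ 2, depending only on the decomposition constants (C₀, c₁, c₂, d, |Ω|), such that the modulus of smoothness w(f,t) := sup_{|h|≤t} ‖f(·+h) - f‖_{L²(Ω ∩ (Ω+h))} satisfies w(f,t) ≤ C p^{n/(2d)} t^{1/2} ‖f‖_{L²(Ω)} for all t > 0. -/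
/-!
For `‖h‖ ≤ t` the difference `f(· + h) - f` of a level-`n` step function is the difference of
the step functions with values `f_{n,k}` on `(Ω_{n,k} - h) \ Ω_{n,k}` and on
`Ω_{n,k} \ (Ω_{n,k} - h)`, so `|f(· + h) - f|² ≤ 2 ∑ₖ f_{n,k}² 𝟙_{Ω_{n,k} ∆ (Ω_{n,k} - h)}`.
By (A6) these symmetric differences have measure at most `2 c₂ t p^{-n(d-1)/d}`, whence
`‖f(· + h) - f‖₂² ≤ 4 c₂ t p^{-n(d-1)/d} ∑ₖ f_{n,k}²`, while the lower bound in (A4) gives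
`‖f‖₂² ≥ C₀⁻¹ |Ω| p^{-n} ∑ₖ f_{n,k}²`. The ratio of the two is `4 c₂ C₀ |Ω|⁻¹ p^{n/d} t`.
-/

open MeasureTheory Set
open scoped ENNReal symmDiff

lemma enorm_sub_sq_le {E : Type*} [SeminormedAddGroup E] (a b : E) :
    ‖a - b‖ₑ ^ 2 ≤ 2 * (‖a‖ₑ ^ 2 + ‖b‖ₑ ^ 2) := by
  calc ‖a - b‖ₑ ^ 2 ≤ (‖a‖ₑ + ‖b‖ₑ) ^ 2 := by gcongr; exact enorm_sub_le
    _ ≤ 2 * (‖a‖ₑ ^ 2 + ‖b‖ₑ ^ 2) := by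
      simpa only [enorm_eq_nnnorm, ENNReal.coe_pow, ENNReal.coe_add, ENNReal.coe_mul,
        ENNReal.coe_ofNat] using ENNReal.coe_le_coe.2 (add_sq_le (a := ‖a‖₊) (b := ‖b‖₊))

section PiecewiseConst

variable {α ι M : Type*}

noncomputable def piecewiseConst [AddCommMonoid M] (S : Finset ι) (s : ι → Set α) (c : ι → M)
    (x : α) : M :=
  ∑ k ∈ S, (s k).indicator (fun _ => c k) x

variable {S : Finset ι} {s : ι → Set α}

lemma piecewiseConst_apply_of_mem [AddCommMonoid M] (c : ι → M)
    (hdisj : (S : Set ι).PairwiseDisjoint s) {k : ι} (hk : k ∈ S) {x : α} (hx : x ∈ s k) :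
    piecewiseConst S s c x = c k := by
  rw [piecewiseConst, Finset.sum_eq_single_of_mem k hk, indicator_of_mem hx]
  intro j hj hjk
  exact indicator_of_notMem (fun hxj => hjk (hdisj.elim_set hj hk x hxj hx)) _

lemma piecewiseConst_apply_of_forall_notMem [AddCommMonoid M] (c : ι → M) {x : α}
    (hx : ∀ k ∈ S, x ∉ s k) : piecewiseConst S s c x = 0 :=
  Finset.sum_eq_zero fun k hk => indicator_of_notMem (hx k hk) _

lemma map_piecewiseConst {N : Type*} [AddCommMonoid M] [AddCommMonoid N] (φ : M → N)
    (hφ : φ 0 = 0) (c : ι → M) (hdisj : (S : Set ι).PairwiseDisjoint s) (x : α) :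
    φ (piecewiseConst S s c x) = piecewiseConst S s (φ ∘ c) x := by
  by_cases hx : ∃ k ∈ S, x ∈ s k
  · obtain ⟨k, hk, hxk⟩ := hx
    rw [piecewiseConst_apply_of_mem c hdisj hk hxk, piecewiseConst_apply_of_mem _ hdisj hk hxk,
      Function.comp_apply]
  · push Not at hx
    rw [piecewiseConst_apply_of_forall_notMem c hx, piecewiseConst_apply_of_forall_notMem _ hx, hφ]

lemma piecewiseConst_comp_sub [AddCommGroup M] (c : ι → M) (τ : α → α) (x : α) :
    piecewiseConst S s c (τ x) - piecewiseConst S s c x =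
      piecewiseConst S (fun k => τ ⁻¹' s k \ s k) c x -
        piecewiseConst S (fun k => s k \ τ ⁻¹' s k) c x := by
  simp only [piecewiseConst, ← Finset.sum_sub_distrib]
  refine Finset.sum_congr rfl fun k _ => ?_
  by_cases h₁ : x ∈ s k <;> by_cases h₂ : τ x ∈ s k <;> simp [h₁, h₂]

lemma piecewiseConst_union_of_disjoint [AddCommMonoid M] {t u : ι → Set α}
    (htu : ∀ k ∈ S, Disjoint (t k) (u k)) (c : ι → M) (x : α) :
    piecewiseConst S t c x + piecewiseConst S u c x =
      piecewiseConst S (fun k => t k ∪ u k) c x := by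
  simp only [piecewiseConst, ← Finset.sum_add_distrib]
  exact Finset.sum_congr rfl fun k hk =>
    (congrFun (indicator_union_of_disjoint (htu k hk) _) x).symm

variable [MeasurableSpace α] {μ : Measure α}

lemma lintegral_piecewiseConst (hs : ∀ k ∈ S, MeasurableSet (s k)) (a : ι → ℝ≥0∞) :
    ∫⁻ x, piecewiseConst S s a x ∂μ = ∑ k ∈ S, a k * μ (s k) := by
  unfold piecewiseConst
  rw [lintegral_finsetSum' _ fun k hk => (measurable_const.indicator (hs k hk)).aemeasurable]
  exact Finset.sum_congr rfl fun k hk => lintegral_indicator_const (hs k hk) _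

variable {E : Type*} [SeminormedAddCommGroup E]

lemma lintegral_enorm_piecewiseConst_sq (c : ι → E) (hs : ∀ k ∈ S, MeasurableSet (s k))
    (hdisj : (S : Set ι).PairwiseDisjoint s) :
    ∫⁻ x, ‖piecewiseConst S s c x‖ₑ ^ 2 ∂μ = ∑ k ∈ S, ‖c k‖ₑ ^ 2 * μ (s k) := by
  simp_rw [map_piecewiseConst (‖·‖ₑ ^ 2) (by simp [enorm_eq_nnnorm]) c hdisj]
  exact lintegral_piecewiseConst hs _

lemma setLIntegral_enorm_piecewiseConst_sq (c : ι → E) (hs : ∀ k ∈ S, MeasurableSet (s k))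
    (hdisj : (S : Set ι).PairwiseDisjoint s) {Ω : Set α} (hΩ : ∀ k ∈ S, s k ⊆ Ω) :
    ∫⁻ x in Ω, ‖piecewiseConst S s c x‖ₑ ^ 2 ∂μ = ∑ k ∈ S, ‖c k‖ₑ ^ 2 * μ (s k) := by
  rw [lintegral_enorm_piecewiseConst_sq c hs hdisj]
  exact Finset.sum_congr rfl fun k hk => by rw [Measure.restrict_eq_self _ (hΩ k hk)]

lemma lintegral_enorm_piecewiseConst_comp_sub_sq_le (c : ι → E) {τ : α → α} (hτ : Measurable τ)
    (hs : ∀ k ∈ S, MeasurableSet (s k)) (hdisj : (S : Set ι).PairwiseDisjoint s) :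
    ∫⁻ x, ‖piecewiseConst S s c (τ x) - piecewiseConst S s c x‖ₑ ^ 2 ∂μ ≤
      2 * ∑ k ∈ S, ‖c k‖ₑ ^ 2 * μ (s k ∆ (τ ⁻¹' s k)) := by
  have hdisj_pre : (S : Set ι).PairwiseDisjoint fun k => τ ⁻¹' s k :=
    fun i hi j hj hij => (hdisj hi hj hij).preimage τ
  have hpointwise : ∀ x, ‖piecewiseConst S s c (τ x) - piecewiseConst S s c x‖ₑ ^ 2 ≤
      2 * piecewiseConst S (fun k => s k ∆ (τ ⁻¹' s k)) (fun k => ‖c k‖ₑ ^ 2) x := fun x => by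
    rw [piecewiseConst_comp_sub]
    refine (enorm_sub_sq_le _ _).trans_eq ?_
    rw [map_piecewiseConst (‖·‖ₑ ^ 2) (by simp [enorm_eq_nnnorm]) c
        (hdisj_pre.mono fun k => sdiff_subset),
      map_piecewiseConst (‖·‖ₑ ^ 2) (by simp [enorm_eq_nnnorm]) c
        (hdisj.mono fun k => sdiff_subset),
      add_comm, piecewiseConst_union_of_disjoint fun k _ => disjoint_sdiff_sdiff]
    rfl
  refine (lintegral_mono hpointwise).trans_eq ?_
  rw [lintegral_const_mul' _ _ ENNReal.ofNat_ne_top,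
    lintegral_piecewiseConst fun k hk => (hs k hk).symmDiff (hτ (hs k hk))]

lemma lintegral_enorm_piecewiseConst_comp_sub_sq_le_mul (c : ι → E) {τ : α → α}
    (hτ : Measurable τ) (hs : ∀ k ∈ S, MeasurableSet (s k))
    (hdisj : (S : Set ι).PairwiseDisjoint s) {Ω : Set α} (hΩ : ∀ k ∈ S, s k ⊆ Ω)
    {δ m K : ℝ≥0∞} (hδ : ∀ k ∈ S, μ (s k ∆ (τ ⁻¹' s k)) ≤ δ) (hm : ∀ k ∈ S, m ≤ μ (s k))
    (hK : 2 * δ ≤ K * m) :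
    ∫⁻ x, ‖piecewiseConst S s c (τ x) - piecewiseConst S s c x‖ₑ ^ 2 ∂μ ≤
      K * ∫⁻ x in Ω, ‖piecewiseConst S s c x‖ₑ ^ 2 ∂μ := by
  rw [setLIntegral_enorm_piecewiseConst_sq c hs hdisj hΩ, Finset.mul_sum]
  refine (lintegral_enorm_piecewiseConst_comp_sub_sq_le c hτ hs hdisj).trans ?_
  rw [Finset.mul_sum]
  refine Finset.sum_le_sum fun k hk => ?_
  calc 2 * (‖c k‖ₑ ^ 2 * μ (s k ∆ (τ ⁻¹' s k))) ≤ ‖c k‖ₑ ^ 2 * (2 * δ) := by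
        rw [mul_left_comm]; gcongr; exact hδ k hk
    _ ≤ ‖c k‖ₑ ^ 2 * (K * μ (s k)) := by grw [hK, hm k hk]
    _ = K * (‖c k‖ₑ ^ 2 * μ (s k)) := mul_left_comm _ _ _

end PiecewiseConst

lemma measure_symmDiff_preimage_add_le {G : Type*} [AddGroup G] [MeasurableSpace G]
    [MeasurableAdd G] (μ : Measure G) [μ.IsAddRightInvariant] (s : Set G) (h : G) :
    μ (s ∆ ((· + h) ⁻¹' s)) ≤ μ (s \ (· + -h) '' s) + μ (s \ (· + h) '' s) := by
  refine (measure_union_le _ _).trans_eq ?_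
  rw [image_add_right, image_add_right, neg_neg,
    ← measure_preimage_add_right μ h (s \ (· + -h) ⁻¹' s)]
  congr 2
  ext x
  simp

lemma measure_symmDiff_preimage_add_le_two_mul {G : Type*} [SeminormedAddGroup G]
    [MeasurableSpace G] [MeasurableAdd G] (μ : Measure G) [μ.IsAddRightInvariant] {s : Set G}
    {t : ℝ} {ε : ℝ≥0∞} (hs : ∀ h : G, ‖h‖ ≤ t → μ (s \ (· + h) '' s) ≤ ε) {h : G}
    (hh : ‖h‖ ≤ t) : μ (s ∆ ((· + h) ⁻¹' s)) ≤ 2 * ε := by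
  rw [two_mul]
  exact (measure_symmDiff_preimage_add_le μ s h).trans
    (add_le_add (hs _ ((norm_neg h).trans_le hh)) (hs h hh))

lemma multiscale_subset_root {α : Type*} {p : ℕ} (hp : 0 < p) (Ωf : ℕ → ℕ → Set α)
    (hsub : ∀ n k j, k < p ^ n → j < p → Ωf (n + 1) (p * k + j) ⊆ Ωf n k) :
    ∀ n k, k < p ^ n → Ωf n k ⊆ Ωf 0 0
  | 0, k, hk => by
    obtain rfl : k = 0 := by simpa using hk
    exact subset_rfl
  | n + 1, k, hk => by
    have hk' : k / p < p ^ n := Nat.div_lt_of_lt_mul (by rwa [← pow_succ'])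
    have := hsub n (k / p) (k % p) hk' (Nat.mod_lt _ hp)
    rw [Nat.div_add_mod] at this
    exact this.trans (multiscale_subset_root hp Ωf hsub n _ hk')

lemma eLpNorm_two_sq {α E : Type*} [MeasurableSpace α] [ENorm E] (f : α → E) (μ : Measure α) :
    eLpNorm f 2 μ ^ 2 = ∫⁻ x, ‖f x‖ₑ ^ 2 ∂μ := by
  simpa using eLpNorm_nnreal_pow_eq_lintegral (f := f) (μ := μ) (p := 2) two_ne_zero

lemma eLpNorm_two_le_of_lintegral_sq_le {α β E F : Type*} [MeasurableSpace α] [MeasurableSpace β]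
    [ENorm E] [ENorm F] {μ : Measure α} {ν : Measure β} {g : α → E} {f : β → F} {K : ℝ≥0∞}
    (h : ∫⁻ x, ‖g x‖ₑ ^ 2 ∂μ ≤ K ^ 2 * ∫⁻ x, ‖f x‖ₑ ^ 2 ∂ν) :
    eLpNorm g 2 μ ≤ K * eLpNorm f 2 ν := by
  rwa [← ENNReal.pow_le_pow_left_iff two_ne_zero, mul_pow, eLpNorm_two_sq, eLpNorm_two_sq]

lemma four_mul_le_sq_mul {p d n c₂ C₀ V t : ℝ} (hp : 0 < p) (hd : d ≠ 0) (ht : 0 < t)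
    (hc₂ : 0 ≤ c₂) (hC₀ : 0 < C₀) (hV : 0 < V) :
    4 * (c₂ * t * p ^ (-(n * (d - 1)) / d)) ≤
      ((2 + 2 * √(c₂ * C₀ / V)) * p ^ (n / (2 * d)) * t ^ (1 / 2 : ℝ)) ^ 2 *
        (C₀⁻¹ * V * p ^ (-n)) := by
  have hpow : p ^ (-(n * (d - 1)) / d) = (p ^ (n / (2 * d))) ^ 2 * p ^ (-n) := by
    rw [← Real.rpow_natCast, ← Real.rpow_mul hp.le, ← Real.rpow_add hp]
    congr 1
    field_simp
    ring
  have hsqrt_t : (t ^ (1 / 2 : ℝ)) ^ 2 = t := by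
    rw [← Real.sqrt_eq_rpow, Real.sq_sqrt ht.le]
  have hC : 4 * (c₂ * C₀ / V) ≤ (2 + 2 * √(c₂ * C₀ / V)) ^ 2 := by
    nlinarith [Real.sq_sqrt (by positivity : 0 ≤ c₂ * C₀ / V), Real.sqrt_nonneg (c₂ * C₀ / V)]
  set X := (p ^ (n / (2 * d))) ^ 2 * t * (C₀⁻¹ * V * p ^ (-n)) with hX
  calc 4 * (c₂ * t * p ^ (-(n * (d - 1)) / d)) = 4 * (c₂ * C₀ / V) * X := by
        rw [hpow, hX]; field_simp
    _ ≤ (2 + 2 * √(c₂ * C₀ / V)) ^ 2 * X := by gcongr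
    _ = _ := by rw [mul_pow, mul_pow, hsqrt_t]; ring

theorem piecewise_constant_modulus_of_smoothness_general (d p : ℕ) (hd : 1 ≤ d) (hp : 2 ≤ p)
    (Ω : Set (EuclideanSpace ℝ (Fin d))) (hΩo : IsOpen Ω) (hΩb : Bornology.IsBounded Ω)
    (hΩne : Ω.Nonempty)
    (Ωf : ℕ → ℕ → Set (EuclideanSpace ℝ (Fin d)))
    (hmeas : ∀ (n k : ℕ), k < p ^ n → MeasurableSet (Ωf n k))
    (h00 : Ωf 0 0 = Ω)
    (hdisj : ∀ (n k k' : ℕ), k < p ^ n → k' < p ^ n → k ≠ k' →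
      Disjoint (Ωf n k) (Ωf n k'))
    (hsub : ∀ (n k j : ℕ), k < p ^ n → j < p → Ωf (n + 1) (p * k + j) ⊆ Ωf n k)
    (C₀ c₂ : ℝ) (hC₀ : 1 ≤ C₀) (hc₂ : 0 < c₂)
    (hA4 : ∀ (n k : ℕ), k < p ^ n →
      C₀⁻¹ * (volume Ω).toReal * (p : ℝ) ^ (-(n : ℝ)) ≤ (volume (Ωf n k)).toReal ∧
      (volume (Ωf n k)).toReal ≤ C₀ * (volume Ω).toReal * (p : ℝ) ^ (-(n : ℝ)))
    (hA6 : ∀ (n k : ℕ), k < p ^ n → ∀ h : EuclideanSpace ℝ (Fin d),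
      volume (Ωf n k \ ((fun x => x + h) '' (Ωf n k)))
        ≤ ENNReal.ofReal (c₂ * ‖h‖ * (p : ℝ) ^ (-((n : ℝ) * (d - 1)) / d))) :
    ∃ C : ℝ, 2 ≤ C ∧
      ∀ (n : ℕ) (coef : ℕ → ℝ) (f : EuclideanSpace ℝ (Fin d) → ℝ),
        (∀ x, f x = ∑ k ∈ Finset.range (p ^ n),
          Set.indicator (Ωf n k) (fun _ => coef k) x) →
        ∀ t : ℝ, 0 < t →
          (⨆ h ∈ {h : EuclideanSpace ℝ (Fin d) | ‖h‖ ≤ t},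
              eLpNorm (fun x => f (x + h) - f x) 2
                (volume.restrict (Ω ∩ {x | x + h ∈ Ω})))
            ≤ ENNReal.ofReal (C * (p : ℝ) ^ ((n : ℝ) / (2 * d)) * t ^ ((1:ℝ)/2)) *
              eLpNorm f 2 (volume.restrict Ω) := by
  have hp₀ : 0 < p := by omega
  set V := (volume Ω).toReal
  have hV : 0 < V := ENNReal.toReal_pos (hΩo.measure_pos volume hΩne).ne' hΩb.measure_lt_top.ne
  refine ⟨2 + 2 * √(c₂ * C₀ / V), le_add_of_nonneg_right (by positivity),
    fun n coef f hf t ht => ?_⟩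
  obtain rfl : f = piecewiseConst (Finset.range (p ^ n)) (Ωf n) coef := funext hf
  refine iSup₂_le fun h hh => (eLpNorm_mono_measure _ Measure.restrict_le_self).trans
    (eLpNorm_two_le_of_lintegral_sq_le ?_)
  set q := c₂ * t * (p : ℝ) ^ (-((n : ℝ) * (d - 1)) / d)
  have hshift : ∀ k ∈ Finset.range (p ^ n),
      volume (Ωf n k ∆ ((· + h) ⁻¹' Ωf n k)) ≤ 2 * ENNReal.ofReal q := fun k hk =>
    measure_symmDiff_preimage_add_le_two_mul volume (fun h' hh' =>
      (hA6 n k (Finset.mem_range.1 hk) h').trans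
        (ENNReal.ofReal_le_ofReal (by simp only [q]; gcongr))) hh
  have hconst : 2 * (2 * ENNReal.ofReal q) ≤
      ENNReal.ofReal ((2 + 2 * √(c₂ * C₀ / V)) * (p : ℝ) ^ ((n : ℝ) / (2 * d)) *
        t ^ ((1 : ℝ) / 2)) ^ 2 * ENNReal.ofReal (C₀⁻¹ * V * (p : ℝ) ^ (-(n : ℝ))) := by
    rw [← ENNReal.ofReal_pow (by positivity), ← ENNReal.ofReal_mul (by positivity), ← mul_assoc,
      show (2 * 2 : ℝ≥0∞) = ENNReal.ofReal 4 by norm_num, ← ENNReal.ofReal_mul (by norm_num)]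
    exact ENNReal.ofReal_le_ofReal (four_mul_le_sq_mul (by positivity)
      (Nat.cast_ne_zero.2 (by omega)) ht hc₂.le (by positivity) hV)
  exact lintegral_enorm_piecewiseConst_comp_sub_sq_le_mul coef (measurable_add_const h)
    (fun k hk => hmeas n k (Finset.mem_range.1 hk))
    (fun k hk k' hk' hkk' => hdisj n k k' (by simpa using hk) (by simpa using hk') hkk')
    (fun k hk => h00 ▸ multiscale_subset_root hp₀ Ωf hsub n k (Finset.mem_range.1 hk)) hshift
    (fun k hk => ENNReal.ofReal_le_of_le_toReal (hA4 n k (Finset.mem_range.1 hk)).1) hconst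

/-- For a level-`n` piecewise constant function `f = ∑_j f_{n,j} 𝟙_{Ω_{n,j}}` with
respect to a regular weakly balanced `p`-multiscale decomposition, the modulus of
smoothness satisfies `w(f,t) ≤ C p^{n/(2d)} t^{1/2} ‖f‖_{L²(Ω)}` with `C ≥ 2`
depending only on the decomposition constants. -/
theorem piecewise_constant_modulus_of_smoothness (d p : ℕ) (hd : 1 ≤ d) (hp : 2 ≤ p)
    (Ω : Set (EuclideanSpace ℝ (Fin d))) (hΩo : IsOpen Ω) (hΩb : Bornology.IsBounded Ω)
    (hΩne : Ω.Nonempty)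
    (Ωf : ℕ → ℕ → Set (EuclideanSpace ℝ (Fin d)))
    (hmeas : ∀ (n k : ℕ), k < p ^ n → MeasurableSet (Ωf n k))
    (hne : ∀ (n k : ℕ), k < p ^ n → (Ωf n k).Nonempty)
    (h00 : Ωf 0 0 = Ω)
    (hdisj : ∀ (n k k' : ℕ), k < p ^ n → k' < p ^ n → k ≠ k' →
      Disjoint (Ωf n k) (Ωf n k'))
    (hsub : ∀ (n k j : ℕ), k < p ^ n → j < p → Ωf (n + 1) (p * k + j) ⊆ Ωf n k)
    (hcover : ∀ (n k : ℕ), k < p ^ n →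
      volume (Ωf n k \ ⋃ j ∈ Finset.range p, Ωf (n + 1) (p * k + j)) = 0)
    (C₀ c₁ c₂ : ℝ) (hC₀ : 1 ≤ C₀) (hc₁ : 0 < c₁) (hc₂ : 0 < c₂)
    (hA4 : ∀ (n k : ℕ), k < p ^ n →
      C₀⁻¹ * (volume Ω).toReal * (p : ℝ) ^ (-(n : ℝ)) ≤ (volume (Ωf n k)).toReal ∧
      (volume (Ωf n k)).toReal ≤ C₀ * (volume Ω).toReal * (p : ℝ) ^ (-(n : ℝ)))
    (hA5 : ∀ (n k : ℕ), k < p ^ n →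
      Metric.diam (Ωf n k) ≤ c₁ * (p : ℝ) ^ (-(n : ℝ) / d))
    (hA6 : ∀ (n k : ℕ), k < p ^ n → ∀ h : EuclideanSpace ℝ (Fin d),
      volume (Ωf n k \ ((fun x => x + h) '' (Ωf n k)))
        ≤ ENNReal.ofReal (c₂ * ‖h‖ * (p : ℝ) ^ (-((n : ℝ) * (d - 1)) / d))) :
    ∃ C : ℝ, 2 ≤ C ∧
      ∀ (n : ℕ) (coef : ℕ → ℝ) (f : EuclideanSpace ℝ (Fin d) → ℝ),
        (∀ x, f x = ∑ k ∈ Finset.range (p ^ n),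
          Set.indicator (Ωf n k) (fun _ => coef k) x) →
        ∀ t : ℝ, 0 < t →
          (⨆ h ∈ {h : EuclideanSpace ℝ (Fin d) | ‖h‖ ≤ t},
              eLpNorm (fun x => f (x + h) - f x) 2
                (volume.restrict (Ω ∩ {x | x + h ∈ Ω})))
            ≤ ENNReal.ofReal (C * (p : ℝ) ^ ((n : ℝ) / (2 * d)) * t ^ ((1:ℝ)/2)) *
              eLpNorm f 2 (volume.restrict Ω) :=
  piecewise_constant_modulus_of_smoothness_general d p hd hp Ω hΩo hΩb hΩne Ωf hmeas h00 hdisj hsub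
    C₀ c₂ hC₀ hc₂ hA4 hA6
end

section
/- Let H be a Hilbert space with a decomposition into closed mutually orthogonal subspaces H = ⊕_{n=0}^∞ U_n, with orthogonal projections Q_n onto U_n and P_n := Q_0 + ... + Q_n. Fix b > 1 and r > 0. For f ∈ H define ‖f‖²_A := ‖P_0 f‖² + ∑_{n=0}^∞ b^{2nr} ‖f - P_n f‖² and ‖f‖²_Z := ∑_{n=0}^∞ b^{2nr} ‖Q_n f‖². Then ‖f‖²_Z ≤ b^{2r} ‖f‖²_A and ‖f‖²_A ≤ max(1, 1/(b^{2r}-1)) ‖f‖²_Z; in particular, ‖f‖_A < ∞ iff ‖f‖_Z < ∞. -/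
open scoped ENNReal InnerProductSpace

/-!
By Pythagoras, `‖f - P_n f‖² = ∑_{k > n} ‖u k‖²`. Writing `C = b^{2r}` and `e k = ‖u k‖²`, this
gives `A = e 0 + ∑_n C^n ∑_{k > n} e k` and `Z = ∑_n C^n e n`. Keeping only the first term of
each tail gives `Z ≤ C A`. Exchanging the order of summation turns `A` into
`e 0 + ∑_{m ≥ 1} (∑_{i < m} C^i) e m`, and the geometric bound `∑_{i < m} C^i ≤ C^m / (C - 1)`
gives `A ≤ max 1 (1 / (C - 1)) Z`.
-/

open Finset

theorem norm_sum_sq_of_pairwise_inner_eq_zero {ι H : Type*} [NormedAddCommGroup H]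
    [InnerProductSpace ℝ H] {v : ι → H} (hv : Pairwise fun i j => ⟪v i, v j⟫_ℝ = 0)
    (s : Finset ι) : ‖∑ i ∈ s, v i‖ ^ 2 = ∑ i ∈ s, ‖v i‖ ^ 2 := by
  classical
  rw [← real_inner_self_eq_norm_sq, sum_inner]
  refine sum_congr rfl fun i hi => ?_
  rw [inner_sum, sum_eq_single_of_mem i hi fun j _ hji => hv hji.symm, real_inner_self_eq_norm_sq]

theorem HasSum.norm_sq_of_pairwise_inner_eq_zero {ι H : Type*} [NormedAddCommGroup H]
    [InnerProductSpace ℝ H] {v : ι → H} {x : H} (hx : HasSum v x)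
    (hv : Pairwise fun i j => ⟪v i, v j⟫_ℝ = 0) : HasSum (fun i => ‖v i‖ ^ 2) (‖x‖ ^ 2) := by
  have h := (((continuous_pow 2).comp continuous_norm).tendsto x).comp hx
  simpa only [HasSum, Function.comp_def, norm_sum_sq_of_pairwise_inner_eq_zero hv] using h

theorem ENNReal.ofReal_norm_sub_sum_range_sq {H : Type*} [NormedAddCommGroup H]
    [InnerProductSpace ℝ H] {u : ℕ → H} {f : H} (hf : HasSum u f)
    (hu : Pairwise fun i j => ⟪u i, u j⟫_ℝ = 0) (n : ℕ) :
    ENNReal.ofReal (‖f - ∑ k ∈ range n, u k‖ ^ 2) = ∑' k, ENNReal.ofReal (‖u (k + n)‖ ^ 2) := by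
  have htail := ((hasSum_nat_add_iff' n).mpr hf).norm_sq_of_pairwise_inner_eq_zero
    fun i j hij => hu (by omega)
  rw [← htail.tsum_eq, ENNReal.ofReal_tsum_of_nonneg (fun k => sq_nonneg _) htail.summable]

theorem ENNReal.tsum_mul_tsum_nat_add_succ (a e : ℕ → ℝ≥0∞) :
    ∑' n, a n * ∑' k, e (k + (n + 1)) = ∑' m, (∑ i ∈ range (m + 1), a i) * e (m + 1) := by
  calc ∑' n, a n * ∑' k, e (k + (n + 1))
      = ∑' p : ℕ × ℕ, a p.1 * e (p.1 + p.2 + 1) := by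
        rw [ENNReal.tsum_prod']
        refine tsum_congr fun n => ?_
        rw [← ENNReal.tsum_mul_left]
        exact tsum_congr fun k => by ring_nf
    _ = ∑' m, ∑ p ∈ antidiagonal m, a p.1 * e (p.1 + p.2 + 1) := by
        rw [← HasAntidiagonal.sigmaAntidiagonalEquivProd.tsum_eq, ENNReal.tsum_sigma']
        exact tsum_congr fun m =>
          tsum_subtype (antidiagonal m) fun p => a p.1 * e (p.1 + p.2 + 1)
    _ = ∑' m, (∑ i ∈ range (m + 1), a i) * e (m + 1) := by
        refine tsum_congr fun m => ?_
        rw [sum_congr rfl fun p hp => by rw [mem_antidiagonal.mp hp], ← sum_mul,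
          Nat.sum_antidiagonal_eq_sum_range_succ_mk]

section WeightedTails

variable {C : ℝ≥0∞} (e : ℕ → ℝ≥0∞)

theorem ENNReal.tsum_pow_mul_le_mul_add_tsum_pow_mul_tsum_tail (hC : 1 ≤ C) :
    ∑' n, C ^ n * e n ≤ C * (e 0 + ∑' n, C ^ n * ∑' k, e (k + (n + 1))) := by
  rw [tsum_eq_zero_add' ENNReal.summable, mul_add, ← ENNReal.tsum_mul_left, pow_zero, one_mul]
  refine add_le_add (le_mul_of_one_le_left zero_le hC) (ENNReal.tsum_le_tsum fun n => ?_)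
  rw [pow_succ', mul_assoc]
  gcongr
  simpa only [zero_add] using ENNReal.le_tsum (f := fun k => e (k + (n + 1))) 0

theorem ENNReal.add_tsum_pow_mul_tsum_tail_le {M : ℝ≥0∞} (hM : 1 ≤ M)
    (hgeom : ∀ m, ∑ i ∈ range (m + 1), C ^ i ≤ M * C ^ (m + 1)) :
    e 0 + ∑' n, C ^ n * ∑' k, e (k + (n + 1)) ≤ M * ∑' n, C ^ n * e n := by
  rw [ENNReal.tsum_mul_tsum_nat_add_succ, tsum_eq_zero_add' (f := fun n => C ^ n * e n)
    ENNReal.summable, mul_add, ← ENNReal.tsum_mul_left, pow_zero, one_mul]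
  refine add_le_add (le_mul_of_one_le_left zero_le hM) (ENNReal.tsum_le_tsum fun m => ?_)
  rw [← mul_assoc]
  exact mul_le_mul_left (hgeom m) _

end WeightedTails

theorem ENNReal.sum_range_ofReal_pow_le {c : ℝ} (hc : 1 < c) (m : ℕ) :
    ∑ i ∈ range m, ENNReal.ofReal c ^ i ≤ ENNReal.ofReal (1 / (c - 1)) * ENNReal.ofReal c ^ m := by
  have hc0 : 0 ≤ c := by linarith
  have hreal : ∑ i ∈ range m, c ^ i ≤ 1 / (c - 1) * c ^ m := by
    rw [geom_sum_eq hc.ne' m, one_div_mul_eq_div]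
    gcongr
    linarith
  rw [← ENNReal.ofReal_pow hc0, ← ENNReal.ofReal_mul (by positivity)]
  simp_rw [← ENNReal.ofReal_pow hc0]
  rw [← ENNReal.ofReal_sum_of_nonneg fun i _ => pow_nonneg hc0 i]
  exact ENNReal.ofReal_le_ofReal hreal

theorem ENNReal.ofReal_rpow_two_mul_natCast_mul {b : ℝ} (hb : 0 ≤ b) (r : ℝ) (n : ℕ) :
    ENNReal.ofReal (b ^ (2 * (n : ℝ) * r)) = ENNReal.ofReal (b ^ (2 * r)) ^ n := by
  rw [← ENNReal.ofReal_pow (by positivity), ← Real.rpow_natCast, ← Real.rpow_mul hb,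
    mul_right_comm]

theorem approximation_norm_equivalence_hilbert_general
    {H : Type*} [NormedAddCommGroup H] [InnerProductSpace ℝ H]
    (b r : ℝ) (hb : 1 < b) (hr : 0 < r)
    (u : ℕ → H) (horth : ∀ i j, i ≠ j → ⟪u i, u j⟫_ℝ = 0)
    (f : H) (hf : HasSum u f)
    (A Z : ℝ≥0∞)
    (hA : A = ENNReal.ofReal (‖u 0‖ ^ 2) +
      ∑' n : ℕ, ENNReal.ofReal (b ^ (2 * (n : ℝ) * r)) *
        ENNReal.ofReal (‖f - ∑ k ∈ Finset.range (n + 1), u k‖ ^ 2))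
    (hZ : Z = ∑' n : ℕ, ENNReal.ofReal (b ^ (2 * (n : ℝ) * r)) *
      ENNReal.ofReal (‖u n‖ ^ 2)) :
    Z ≤ ENNReal.ofReal (b ^ (2 * r)) * A ∧
    A ≤ max 1 (ENNReal.ofReal (1 / (b ^ (2 * r) - 1))) * Z ∧
    (A < ⊤ ↔ Z < ⊤) := by
  have hc : 1 < b ^ (2 * r) := Real.one_lt_rpow hb (by positivity)
  simp_rw [ENNReal.ofReal_rpow_two_mul_natCast_mul (zero_le_one.trans hb.le),
    ENNReal.ofReal_norm_sub_sum_range_sq hf horth] at hA hZ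
  have hZA : Z ≤ ENNReal.ofReal (b ^ (2 * r)) * A := hA ▸ hZ ▸
    ENNReal.tsum_pow_mul_le_mul_add_tsum_pow_mul_tsum_tail _ (ENNReal.one_le_ofReal.mpr hc.le)
  have hAZ : A ≤ max 1 (ENNReal.ofReal (1 / (b ^ (2 * r) - 1))) * Z := hA ▸ hZ ▸
    ENNReal.add_tsum_pow_mul_tsum_tail_le _ (le_max_left _ _) fun m =>
      (ENNReal.sum_range_ofReal_pow_le hc (m + 1)).trans (by gcongr; exact le_max_right _ _)
  have hM : max 1 (ENNReal.ofReal (1 / (b ^ (2 * r) - 1))) < ⊤ :=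
    max_lt ENNReal.one_lt_top ENNReal.ofReal_lt_top
  exact ⟨hZA, hAZ, fun hA => hZA.trans_lt (ENNReal.mul_lt_top ENNReal.ofReal_lt_top hA),
    fun hZ => hAZ.trans_lt (ENNReal.mul_lt_top hM hZ)⟩

/-- Abstract Hilbert-space form of the equivalence of the two approximation-space
norms: if `f = ∑ u_n` with the `u_n` mutually orthogonal (so `P_n f = ∑_{k≤n} u_k`
and `Q_n f = u_n`), then with `A = ‖P_0 f‖² + ∑_n b^{2nr}‖f - P_n f‖²` and
`Z = ∑_n b^{2nr}‖Q_n f‖²` one has `Z ≤ b^{2r} A`, `A ≤ max(1, 1/(b^{2r}-1)) Z`,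
and in particular `A < ∞ ↔ Z < ∞`. -/
theorem approximation_norm_equivalence_hilbert
    {H : Type*} [NormedAddCommGroup H] [InnerProductSpace ℝ H] [CompleteSpace H]
    (b r : ℝ) (hb : 1 < b) (hr : 0 < r)
    (u : ℕ → H) (horth : ∀ i j, i ≠ j → ⟪u i, u j⟫_ℝ = 0)
    (f : H) (hf : HasSum u f)
    (A Z : ℝ≥0∞)
    (hA : A = ENNReal.ofReal (‖u 0‖ ^ 2) +
      ∑' n : ℕ, ENNReal.ofReal (b ^ (2 * (n : ℝ) * r)) *
        ENNReal.ofReal (‖f - ∑ k ∈ Finset.range (n + 1), u k‖ ^ 2))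
    (hZ : Z = ∑' n : ℕ, ENNReal.ofReal (b ^ (2 * (n : ℝ) * r)) *
      ENNReal.ofReal (‖u n‖ ^ 2)) :
    Z ≤ ENNReal.ofReal (b ^ (2 * r)) * A ∧
    A ≤ max 1 (ENNReal.ofReal (1 / (b ^ (2 * r) - 1))) * Z ∧
    (A < ⊤ ↔ Z < ⊤) :=
  approximation_norm_equivalence_hilbert_general b r hb hr u horth f hf A Z hA hZ
end

section
/- Let ℓ ∈ (0,1), α > 0, p ≥ 2 with ℓ < αp < 1/ℓ, and let F_rad be the normalized radial harmonic function on (0,L) (with F_rad' = √(1-ℓ/(αp))/q, F_rad(0)=0, q(t)=(αp)^n on (t_{n-1},t_n)). Then ‖F_rad‖²_{L²((0,L), q dt)} = (1 - ℓ/(αp)) · [ (1/3)∑_{n=0}^∞ (ℓ³/(αp))^n + ∑_{n=0}^∞ ℓ^{2n} (1-(ℓ/(αp))^n)/(1-ℓ/(αp)) + ∑_{n=0}^∞ (αpℓ)^n ((1-(ℓ/(αp))^n)/(1-ℓ/(αp)))² ], and all three series converge (using ℓ<1, ℓ³<αp, αpℓ<1); in particular F_rad ∈ L²((0,L), q dt).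 -/
open MeasureTheory
open scoped ENNReal

open Set Filter Topology Finset

/-!
On the `n`-th step interval `(T n, T n + ℓ ^ n)` the weight `q` is the constant `(αp) ^ n` and
`F` is affine, so `∫ F² q` over it is a cubic polynomial in `ℓ ^ n` whose three monomials are the
`n`-th terms of the three series. The step intervals exhaust `(0, L)` up to the countable set of
endpoints, so the weighted norm is the sum of these pieces; the series converge by comparison
with the geometric series of ratios `ℓ³/(αp)`, `ℓ²` and `αpℓ`.
-/

theorem iUnion_Ico_succ_eq_Ico_of_tendsto {T : ℕ → ℝ} (hT : Monotone T) {L : ℝ}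
    (hL : Tendsto T atTop (𝓝 L)) : ⋃ n, Ico (T n) (T (n + 1)) = Ico (T 0) L := by
  ext t
  simp only [mem_iUnion, Set.mem_Ico]
  constructor
  · rintro ⟨n, hn, hn'⟩
    exact ⟨(hT n.zero_le).trans hn, hn'.trans_le (hT.ge_of_tendsto hL _)⟩
  · rintro ⟨h0, hL'⟩
    obtain ⟨N, hN⟩ := (hL.eventually (lt_mem_nhds hL')).exists
    induction N with
    | zero => exact absurd h0 hN.not_ge
    | succ N ih => exact (lt_or_ge t (T N)).elim ih fun h => ⟨N, h, hN⟩

theorem lintegral_Ioo_eq_tsum_of_tendsto {μ : Measure ℝ} [NullSingletonClass μ] {T : ℕ → ℝ}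
    (hT : Monotone T) {L : ℝ} (hL : Tendsto T atTop (𝓝 L)) (f : ℝ → ℝ≥0∞) :
    ∫⁻ t in Ioo (T 0) L, f t ∂μ = ∑' n, ∫⁻ t in Ioo (T n) (T (n + 1)), f t ∂μ := by
  have hdisj : Pairwise (Function.onFun Disjoint fun n => Ico (T n) (T (n + 1))) :=
    hT.pairwise_disjoint_on_Ico_succ
  rw [setLIntegral_congr Ioo_ae_eq_Ico, ← iUnion_Ico_succ_eq_Ico_of_tendsto hT hL,
    lintegral_iUnion (fun _ => measurableSet_Ico) hdisj]
  exact tsum_congr fun n => setLIntegral_congr Ioo_ae_eq_Ico.symm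

theorem lintegral_Ioo_eq_tsum_geom {μ : Measure ℝ} [NullSingletonClass μ] {ℓ : ℝ} (hℓ0 : 0 ≤ ℓ)
    (hℓ1 : ℓ < 1) (f : ℝ → ℝ≥0∞) :
    ∫⁻ t in Ioo 0 (1 - ℓ)⁻¹, f t ∂μ =
      ∑' n, ∫⁻ t in Ioo (∑ k ∈ range n, ℓ ^ k) (∑ k ∈ range (n + 1), ℓ ^ k), f t ∂μ := by
  have hmono : Monotone fun n => ∑ k ∈ range n, ℓ ^ k :=
    monotone_nat_of_le_succ fun n => by
      rw [sum_range_succ]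
      exact le_add_of_nonneg_right (pow_nonneg hℓ0 n)
  simpa using lintegral_Ioo_eq_tsum_of_tendsto hmono
    (hasSum_geometric_of_lt_one hℓ0 hℓ1).tendsto_sum_nat f

theorem integral_Ioo_affine_sq (a h c s : ℝ) (hh : 0 ≤ h) :
    ∫ t in Ioo a (a + h), ((t - a) * c + s) ^ 2 =
      c ^ 2 * h ^ 3 / 3 + c * s * h ^ 2 + s ^ 2 * h := by
  rw [← integral_Ioc_eq_integral_Ioo, ← intervalIntegral.integral_of_le (by linarith),
    intervalIntegral.integral_comp_sub_right (fun x => (x * c + s) ^ 2)]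
  -- `x * k`, not `k * x`, which would be eta-reduced to `(k * ·)` and escape `integral_const_mul`.
  have hexpand : ∀ x : ℝ, (x * c + s) ^ 2 = c ^ 2 * x ^ 2 + x * (2 * c * s) + s ^ 2 :=
    fun x => by ring
  simp only [hexpand]
  rw [intervalIntegral.integral_add (Continuous.intervalIntegrable (by fun_prop) _ _)
      (Continuous.intervalIntegrable (by fun_prop) _ _),
    intervalIntegral.integral_add (Continuous.intervalIntegrable (by fun_prop) _ _)
      (Continuous.intervalIntegrable (by fun_prop) _ _)]
  simp only [intervalIntegral.integral_const_mul, intervalIntegral.integral_mul_const, integral_pow,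
    integral_id, intervalIntegral.integral_const, smul_eq_mul]
  ring

theorem one_sub_pow_div_one_sub_nonneg {r : ℝ} (hr0 : 0 ≤ r) (hr1 : r < 1) (n : ℕ) :
    0 ≤ (1 - r ^ n) / (1 - r) :=
  div_nonneg (sub_nonneg.2 (pow_le_one₀ hr0 hr1.le)) (sub_nonneg.2 hr1.le)

theorem one_sub_pow_div_one_sub_le {r : ℝ} (hr0 : 0 ≤ r) (hr1 : r < 1) (n : ℕ) :
    (1 - r ^ n) / (1 - r) ≤ (1 - r)⁻¹ := by
  rw [div_eq_mul_inv]
  exact mul_le_of_le_one_left (inv_nonneg.2 (sub_nonneg.2 hr1.le))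
    (sub_le_self _ (pow_nonneg hr0 n))

theorem summable_pow_mul_one_sub_pow_div_one_sub_pow {x r : ℝ} (hx0 : 0 ≤ x) (hx1 : x < 1)
    (hr0 : 0 ≤ r) (hr1 : r < 1) (k : ℕ) :
    Summable fun n : ℕ => x ^ n * ((1 - r ^ n) / (1 - r)) ^ k := by
  have hS := one_sub_pow_div_one_sub_nonneg hr0 hr1
  exact ((summable_geometric_of_lt_one hx0 hx1).mul_right ((1 - r)⁻¹ ^ k)).of_nonneg_of_le
    (fun n => mul_nonneg (pow_nonneg hx0 n) (pow_nonneg (hS n) k))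
    fun n => mul_le_mul_of_nonneg_left
      (pow_le_pow_left₀ (hS n) (one_sub_pow_div_one_sub_le hr0 hr1 n) k) (pow_nonneg hx0 n)

theorem lintegral_radial_piece {ℓ A : ℝ} (hℓ : 0 < ℓ) (hℓA : ℓ < A) (a : ℝ) (n : ℕ) :
    ∫⁻ t in Ioo a (a + ℓ ^ n), ENNReal.ofReal
        ((√(1 - ℓ / A) * ((t - a) / A ^ n + ∑ k ∈ range n, (ℓ / A) ^ k)) ^ 2 * A ^ n) =
      ENNReal.ofReal ((1 - ℓ / A) * ((1 / 3) * (ℓ ^ 3 / A) ^ n +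
        ℓ ^ (2 * n) * (1 - (ℓ / A) ^ n) / (1 - ℓ / A) +
        (A * ℓ) ^ n * ((1 - (ℓ / A) ^ n) / (1 - ℓ / A)) ^ 2)) := by
  have hA : 0 < A := hℓ.trans hℓA
  have hr1 : ℓ / A < 1 := (div_lt_one hA).2 hℓA
  set r := ℓ / A
  have hgeom : ∑ k ∈ range n, r ^ k = (1 - r ^ n) / (1 - r) := by
    rw [geom_sum_eq hr1.ne, ← neg_sub, ← neg_sub 1 r, neg_div_neg_eq]
  have hintegrand : ∀ t, (√(1 - r) * ((t - a) / A ^ n + ∑ k ∈ range n, r ^ k)) ^ 2 * A ^ n =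
      ((t - a) * (A ^ n)⁻¹ + (1 - r ^ n) / (1 - r)) ^ 2 * ((1 - r) * A ^ n) := fun t => by
    rw [hgeom, mul_pow, Real.sq_sqrt (sub_nonneg.2 hr1.le)]
    ring
  simp only [hintegrand]
  rw [← ofReal_integral_eq_lintegral_ofReal, integral_mul_const,
    integral_Ioo_affine_sq _ _ _ _ (pow_nonneg hℓ.le n)]
  · have hr1' : 1 - r ≠ 0 := (sub_pos.2 hr1).ne'
    have hA' : A ≠ 0 := hA.ne'
    congr 1
    rw [div_pow (ℓ ^ 3), mul_pow A, ← pow_mul, ← pow_mul]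
    field_simp
    ring
  · exact (Continuous.integrableOn_Icc (by fun_prop)).mono_set Ioo_subset_Icc_self
  · exact Eventually.of_forall fun t => mul_nonneg (sq_nonneg _)
      (mul_nonneg (sub_nonneg.2 hr1.le) (pow_nonneg hA.le n))

theorem tsum_ofReal_mul_add_add {c : ℝ} {x y z : ℕ → ℝ} (hc : 0 ≤ c) (hx0 : ∀ n, 0 ≤ x n)
    (hy0 : ∀ n, 0 ≤ y n) (hz0 : ∀ n, 0 ≤ z n) (hx : Summable x) (hy : Summable y)
    (hz : Summable z) :
    ∑' n, ENNReal.ofReal (c * (x n + y n + z n)) =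
      ENNReal.ofReal (c * (∑' n, x n + ∑' n, y n + ∑' n, z n)) := by
  rw [← ENNReal.ofReal_tsum_of_nonneg
      (fun n => mul_nonneg hc (add_nonneg (add_nonneg (hx0 n) (hy0 n)) (hz0 n)))
      (((hx.add hy).add hz).mul_left c),
    tsum_mul_left, (hx.add hy).tsum_add hz, hx.tsum_add hy]

section RadialSeries

variable {ℓ A : ℝ} (hℓ0 : 0 < ℓ) (hℓ1 : ℓ < 1) (hℓA : ℓ < A) (hAℓ : A * ℓ < 1)
include hℓ0 hℓ1 hℓA hAℓ

theorem summable_radial_series :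
    Summable (fun n : ℕ => (ℓ ^ 3 / A) ^ n) ∧
    Summable (fun n : ℕ => ℓ ^ (2 * n) * (1 - (ℓ / A) ^ n) / (1 - ℓ / A)) ∧
    Summable (fun n : ℕ => (A * ℓ) ^ n * ((1 - (ℓ / A) ^ n) / (1 - ℓ / A)) ^ 2) := by
  have hA : 0 < A := hℓ0.trans hℓA
  have hr0 : 0 ≤ ℓ / A := div_nonneg hℓ0.le hA.le
  have hr1 : ℓ / A < 1 := (div_lt_one hA).2 hℓA
  refine ⟨summable_geometric_of_lt_one (by positivity) ((div_lt_one hA).2 ?_), ?_,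
    summable_pow_mul_one_sub_pow_div_one_sub_pow (mul_pos hA hℓ0).le hAℓ hr0 hr1 2⟩
  · exact (pow_le_of_le_one hℓ0.le hℓ1.le three_ne_zero).trans_lt hℓA
  · exact (summable_pow_mul_one_sub_pow_div_one_sub_pow (sq_nonneg ℓ) (by nlinarith) hr0 hr1
      1).congr fun n => by ring

theorem tsum_ofReal_radial_series :
    ∑' n : ℕ, ENNReal.ofReal ((1 - ℓ / A) * ((1 / 3) * (ℓ ^ 3 / A) ^ n +
        ℓ ^ (2 * n) * (1 - (ℓ / A) ^ n) / (1 - ℓ / A) +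
        (A * ℓ) ^ n * ((1 - (ℓ / A) ^ n) / (1 - ℓ / A)) ^ 2)) =
      ENNReal.ofReal ((1 - ℓ / A) * ((1 / 3) * ∑' n : ℕ, (ℓ ^ 3 / A) ^ n +
        ∑' n : ℕ, ℓ ^ (2 * n) * (1 - (ℓ / A) ^ n) / (1 - ℓ / A) +
        ∑' n : ℕ, (A * ℓ) ^ n * ((1 - (ℓ / A) ^ n) / (1 - ℓ / A)) ^ 2)) := by
  have hA : 0 < A := hℓ0.trans hℓA
  have hr1 : ℓ / A < 1 := (div_lt_one hA).2 hℓA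
  have hS : ∀ n : ℕ, 0 ≤ (1 - (ℓ / A) ^ n) / (1 - ℓ / A) :=
    one_sub_pow_div_one_sub_nonneg (div_nonneg hℓ0.le hA.le) hr1
  obtain ⟨hs1, hs2, hs3⟩ := summable_radial_series hℓ0 hℓ1 hℓA hAℓ
  rw [tsum_ofReal_mul_add_add (sub_nonneg.2 hr1.le) (fun n => by positivity)
      (fun n => by simpa only [mul_div_assoc] using mul_nonneg (by positivity) (hS n))
      (fun n => mul_nonneg (pow_nonneg (mul_pos hA hℓ0).le n) (sq_nonneg _))
      (hs1.mul_left (1 / 3)) hs2 hs3, tsum_mul_left]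

end RadialSeries

theorem radial_harmonic_L2_norm_general (ℓ α : ℝ) (p : ℕ) (hℓ0 : 0 < ℓ) (hℓ1 : ℓ < 1)
    (hlap : ℓ < α * p) (hlap' : α * p < 1 / ℓ)
    (T : ℕ → ℝ) (hT : ∀ n, T n = ∑ k ∈ Finset.range n, ℓ ^ k)
    (L : ℝ) (hL : L = 1 / (1 - ℓ))
    (q : ℝ → ℝ)
    (hq : ∀ n : ℕ, ∀ t ∈ Set.Ioo (T n) (T (n + 1)), q t = (α * p) ^ n)
    (F : ℝ → ℝ)
    (hF : ∀ n : ℕ, ∀ t ∈ Set.Icc (T n) (T (n + 1)),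
      F t = Real.sqrt (1 - ℓ / (α * p)) *
        ((t - T n) / (α * p) ^ n + ∑ k ∈ Finset.range n, (ℓ / (α * p)) ^ k)) :
    Summable (fun n : ℕ => (ℓ ^ 3 / (α * p)) ^ n) ∧
    Summable (fun n : ℕ =>
      ℓ ^ (2 * n) * (1 - (ℓ / (α * p)) ^ n) / (1 - ℓ / (α * p))) ∧
    Summable (fun n : ℕ =>
      (α * p * ℓ) ^ n * ((1 - (ℓ / (α * p)) ^ n) / (1 - ℓ / (α * p))) ^ 2) ∧
    (∫⁻ t in Set.Ioo 0 L, ENNReal.ofReal (F t ^ 2 * q t))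
      = ENNReal.ofReal ((1 - ℓ / (α * p)) *
          ((1 / 3) * (∑' n : ℕ, (ℓ ^ 3 / (α * p)) ^ n) +
            (∑' n : ℕ, ℓ ^ (2 * n) * (1 - (ℓ / (α * p)) ^ n) / (1 - ℓ / (α * p))) +
            (∑' n : ℕ, (α * p * ℓ) ^ n *
              ((1 - (ℓ / (α * p)) ^ n) / (1 - ℓ / (α * p))) ^ 2))) ∧
    (∫⁻ t in Set.Ioo 0 L, ENNReal.ofReal (F t ^ 2 * q t)) < ⊤ := by
  set A : ℝ := α * p
  have hAℓ : A * ℓ < 1 := (lt_div_iff₀ hℓ0).1 hlap'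
  have hnorm : ∫⁻ t in Ioo 0 L, ENNReal.ofReal (F t ^ 2 * q t) = ∑' n, ENNReal.ofReal
      ((1 - ℓ / A) * ((1 / 3) * (ℓ ^ 3 / A) ^ n + ℓ ^ (2 * n) * (1 - (ℓ / A) ^ n) / (1 - ℓ / A) +
        (A * ℓ) ^ n * ((1 - (ℓ / A) ^ n) / (1 - ℓ / A)) ^ 2)) := by
    rw [hL, one_div, lintegral_Ioo_eq_tsum_geom hℓ0.le hℓ1]
    refine tsum_congr fun n => ?_
    have hsucc : T (n + 1) = T n + ℓ ^ n := by rw [hT, hT, sum_range_succ]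
    rw [← hT, ← hT, hsucc, ← lintegral_radial_piece hℓ0 hlap]
    refine setLIntegral_congr_fun measurableSet_Ioo fun t ht => ?_
    rw [← hsucc] at ht
    rw [hq n t ht, hF n t (Ioo_subset_Icc_self ht)]
  obtain ⟨hs1, hs2, hs3⟩ := summable_radial_series hℓ0 hℓ1 hlap hAℓ
  rw [hnorm, tsum_ofReal_radial_series hℓ0 hℓ1 hlap hAℓ]
  exact ⟨hs1, hs2, hs3, rfl, ENNReal.ofReal_lt_top⟩

/-- Squared weighted `L²`-norm of the normalized radial harmonic function `F_rad`:
it equals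
`(1-ℓ/(αp))[(1/3)∑(ℓ³/(αp))^n + ∑ ℓ^{2n}(1-(ℓ/(αp))^n)/(1-ℓ/(αp))
 + ∑ (αpℓ)^n((1-(ℓ/(αp))^n)/(1-ℓ/(αp)))²]`,
all three series converge, and in particular `F_rad ∈ L²((0,L), q dt)`. -/
theorem radial_harmonic_L2_norm (ℓ α : ℝ) (p : ℕ) (hℓ0 : 0 < ℓ) (hℓ1 : ℓ < 1)
    (hα : 0 < α) (hp : 2 ≤ p) (hlap : ℓ < α * p) (hlap' : α * p < 1 / ℓ)
    (T : ℕ → ℝ) (hT : ∀ n, T n = ∑ k ∈ Finset.range n, ℓ ^ k)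
    (L : ℝ) (hL : L = 1 / (1 - ℓ))
    (q : ℝ → ℝ) (hq0 : ∀ t, 0 < q t)
    (hq : ∀ n : ℕ, ∀ t ∈ Set.Ioo (T n) (T (n + 1)), q t = (α * p) ^ n)
    (F : ℝ → ℝ)
    (hF : ∀ n : ℕ, ∀ t ∈ Set.Icc (T n) (T (n + 1)),
      F t = Real.sqrt (1 - ℓ / (α * p)) *
        ((t - T n) / (α * p) ^ n + ∑ k ∈ Finset.range n, (ℓ / (α * p)) ^ k)) :
    Summable (fun n : ℕ => (ℓ ^ 3 / (α * p)) ^ n) ∧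
    Summable (fun n : ℕ =>
      ℓ ^ (2 * n) * (1 - (ℓ / (α * p)) ^ n) / (1 - ℓ / (α * p))) ∧
    Summable (fun n : ℕ =>
      (α * p * ℓ) ^ n * ((1 - (ℓ / (α * p)) ^ n) / (1 - ℓ / (α * p))) ^ 2) ∧
    (∫⁻ t in Set.Ioo 0 L, ENNReal.ofReal (F t ^ 2 * q t))
      = ENNReal.ofReal ((1 - ℓ / (α * p)) *
          ((1 / 3) * (∑' n : ℕ, (ℓ ^ 3 / (α * p)) ^ n) +
            (∑' n : ℕ, ℓ ^ (2 * n) * (1 - (ℓ / (α * p)) ^ n) / (1 - ℓ / (α * p))) +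
            (∑' n : ℕ, (α * p * ℓ) ^ n *
              ((1 - (ℓ / (α * p)) ^ n) / (1 - ℓ / (α * p))) ^ 2))) ∧
    (∫⁻ t in Set.Ioo 0 L, ENNReal.ofReal (F t ^ 2 * q t)) < ⊤ :=
  radial_harmonic_L2_norm_general ℓ α p hℓ0 hℓ1 hlap hlap' T hT L hL q hq F hF
end
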